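/- Let θ ∈ ℤ[v] be a polynomial with constant term 1, let δ ∈ ℤ, and let f ∈ ℤ[v, v⁻¹] be a Laurent polynomial. Viewing θ as an invertible element of the power series ring ℤ[[v]], if θ⁻¹ · f ∈ δ + vℤ[[v]], then f ∈ δ + vℤ[v]; that is, f is a genuine polynomial in v with constant term δ. -/

import Mathlib

open Polynomial LaurentPolynomial

namespace LaurentPolynomial

variable {R : Type*} [Semiring R]

theorem coeff_trunc (f : R[T;T⁻¹]) (n : ℕ) : (trunc f).coeff n = f.coeff n := rfl

theorem coeff_toLaurent_natCast (p : R[X]) (n : ℕ) : (toLaurent p).coeff n = p.coeff n := by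
  rw [coeff_toLaurent]
  exact Finsupp.mapDomain_apply Nat.castEmbedding.injective _ n

theorem coeff_toLaurent_of_neg (p : R[X]) {n : ℤ} (hn : n < 0) : (toLaurent p).coeff n = 0 := by
  rw [coeff_toLaurent]
  refine Finsupp.mapDomain_of_notMem_range _ _ ?_
  rintro ⟨m, rfl⟩
  exact (Int.natCast_nonneg m).not_gt hn

theorem toLaurent_trunc_of_coeff_neg {f : R[T;T⁻¹]} (hf : ∀ n < 0, f.coeff n = 0) :
    toLaurent (trunc f) = f := by
  refine LaurentPolynomial.ext fun n => ?_
  rcases lt_or_ge n 0 with hn | hn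
  · rw [coeff_toLaurent_of_neg _ hn, hf n hn]
  · lift n to ℕ using hn
    rw [coeff_toLaurent_natCast, coeff_trunc]

end LaurentPolynomial

/-- Key arithmetic lemma from the proof of 2.14(b): if `θ ∈ ℤ[v]` has constant term 1,
`f` is a Laurent polynomial, and `θ⁻¹ · f ∈ δ + vℤ⟦v⟧` (i.e. `f = θ · s` in `ℤ((v))` for a
power series `s` with constant term `δ`), then `f` is a polynomial with constant term `δ`. -/
theorem stmt1 (θ : Polynomial ℤ) (hθ : θ.coeff 0 = 1) (δ : ℤ)
    (f : LaurentPolynomial ℤ)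
    (h : ∃ s : PowerSeries ℤ, PowerSeries.constantCoeff s = δ ∧
      ∀ n : ℤ, f.coeff n = if 0 ≤ n then
        PowerSeries.coeff n.toNat ((θ : PowerSeries ℤ) * s) else 0) :
    ∃ p : Polynomial ℤ, f = Polynomial.toLaurent p ∧ p.coeff 0 = δ := by
  obtain ⟨s, hs, hf⟩ := h
  have hf_neg : ∀ n < 0, f.coeff n = 0 := fun n hn => by rw [hf n, if_neg hn.not_ge]
  refine ⟨trunc f, (toLaurent_trunc_of_coeff_neg hf_neg).symm, ?_⟩
  calc (trunc f).coeff 0 = PowerSeries.constantCoeff ((θ : PowerSeries ℤ) * s) := by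
        rw [coeff_trunc, Nat.cast_zero, hf 0, if_pos le_rfl, Int.toNat_zero,
          PowerSeries.coeff_zero_eq_constantCoeff_apply]
    _ = δ := by rw [map_mul, Polynomial.constantCoeff_coe, hθ, hs, one_mul]
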